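/- Let G be a finite simple graph on vertex set {1,…,n}, let 0 < ε < 1, let e be an edge of G, and let G' be the ε-sparsification of G. For each edge f of K_n, changing whether e is retained in G' (keeping all other retention choices fixed) changes the value of Σ_{f ∈ K_n} Z_f(G')² by at most Z_e(G)·Y_e(G) + Σ_{{e′,e″}} (2·Y_{e′}(G) + 2·Y_{e″}(G) + 2), where the last sum ranges over all sets {e′, e″} of edges of G such that {e, e′, e″} forms a triangle in G. -/

import Mathlib

open MeasureTheory ProbabilityTheory Real Filter

namespace RandomTriangles

/-- A graph on vertex set `Fin n`, given by edge indicators on unordered pairs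
(values on diagonal pairs are never consulted). -/
abbrev Graph (n : ℕ) := Sym2 (Fin n) → Bool

/-- The edge set of the complete graph `K_n`: all non-diagonal unordered pairs. -/
noncomputable def edges (n : ℕ) : Finset (Sym2 (Fin n)) :=
  Finset.univ.filter fun e => ¬ e.IsDiag

/-- The unordered pairs `e, f, g` form the three edges of a triangle. -/
def IsTriangleEdges {n : ℕ} (e f g : Sym2 (Fin n)) : Prop :=
  ∃ u v w : Fin n, u ≠ v ∧ v ≠ w ∧ u ≠ w ∧ e = s(u, v) ∧ f = s(v, w) ∧ g = s(u, w)

/-- `X G` is the number of triangles (3-cliques) of `G`. -/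
noncomputable def X {n : ℕ} (G : Graph n) : ℕ :=
  Nat.card {T : Finset (Fin n) // T.card = 3 ∧ ∀ u ∈ T, ∀ v ∈ T, u ≠ v → G s(u, v) = true}

/-- `Y G e` is the number of (unordered) sets `{f, g}` of edges of `G` such that
`{e, f, g}` is a triangle. -/
noncomputable def Y {n : ℕ} (G : Graph n) (e : Sym2 (Fin n)) : ℕ :=
  Nat.card {P : Sym2 (Sym2 (Fin n)) //
    ∃ f g, P = s(f, g) ∧ G f = true ∧ G g = true ∧ IsTriangleEdges e f g}

/-- `Z G e = Y G e` if `e` is an edge of `G`, and `0` otherwise. -/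
noncomputable def Z {n : ℕ} (G : Graph n) (e : Sym2 (Fin n)) : ℕ :=
  if G e = true then Y G e else 0

/-- The Bernoulli measure with parameter `p` on `Bool`. -/
noncomputable def bern (p : ℝ) : Measure Bool :=
  ENNReal.ofReal p • Measure.dirac true + ENNReal.ofReal (1 - p) • Measure.dirac false

/-- The product of independent Bernoulli(`p`) coin flips, one for each unordered pair
of vertices.  Under this measure, the identity map `ω ↦ ω` is the random graph `G(n,p)`,
and `ω ↦ sparsify G ω` is the `p`-sparsification of `G`. -/
noncomputable def edgeMeasure (n : ℕ) (p : ℝ) : Measure (Sym2 (Fin n) → Bool) :=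
  Measure.pi fun _ => bern p

/-- The sparsification of `G` determined by the retention choices `ω`. -/
def sparsify {n : ℕ} (G : Graph n) (ω : Sym2 (Fin n) → Bool) : Graph n :=
  fun e => G e && ω e

/-- `G` with the edge `e` removed. -/
def removeEdge {n : ℕ} (G : Graph n) (e : Sym2 (Fin n)) : Graph n :=
  fun f => if f = e then false else G f

open scoped Classical in
/-- The unordered pairs `{f, g}` of edges of `G` forming a triangle together with `e`. -/
noncomputable def trianglePairs {n : ℕ} (G : Graph n) (e : Sym2 (Fin n)) :
    Finset (Sym2 (Sym2 (Fin n))) :=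
  Finset.univ.filter fun P => ∃ f g, P = s(f, g) ∧ G f = true ∧ G g = true ∧
    IsTriangleEdges e f g

/-- `pairCost h` sends the unordered pair `{f, g}` to `2 * h f + 2 * h g + 2`. -/
noncomputable def pairCost {n : ℕ} (h : Sym2 (Fin n) → ℝ) : Sym2 (Sym2 (Fin n)) → ℝ :=
  Sym2.lift ⟨fun f g => 2 * h f + 2 * h g + 2, fun f g => by ring⟩

/-!
Deleting `e` from `H ≤ G` can only lower each `Z_f`, so the difference of the two sums is a sum
of nonnegative terms and may be taken over all pairs `f`. The term `f = e` is at most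
`Z_e(G) Y_e(G)`. For `f ≠ e`, `Y_f` drops by at most the number `c_f` of triangle pairs of `e` in
`G` containing `f`, so `Z_f²` drops by at most `2 Y_f(G) c_f`; summing over `f` counts each pair
`{e', e''}` once through `e'` and once through `e''`.
-/

open Finset

variable {n : ℕ}

lemma mem_trianglePairs {G : Graph n} {e : Sym2 (Fin n)} {P : Sym2 (Sym2 (Fin n))} :
    P ∈ trianglePairs G e ↔
      ∃ f g, P = s(f, g) ∧ G f = true ∧ G g = true ∧ IsTriangleEdges e f g := by
  simp [trianglePairs]

lemma Y_eq_card_trianglePairs (G : Graph n) (e : Sym2 (Fin n)) :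
    Y G e = #(trianglePairs G e) := by
  classical
  rw [Y, Nat.card_eq_fintype_card, Fintype.card_subtype]
  exact congrArg Finset.card (by ext P; simp [mem_trianglePairs])

namespace IsTriangleEdges

variable {e f g : Sym2 (Fin n)}

lemma swap_left (h : IsTriangleEdges e f g) : IsTriangleEdges f e g := by
  obtain ⟨u, v, w, huv, hvw, huw, rfl, rfl, rfl⟩ := h
  exact ⟨w, v, u, hvw.symm, huv.symm, huw.symm, Sym2.eq_swap, Sym2.eq_swap, Sym2.eq_swap⟩

lemma swap_right (h : IsTriangleEdges e f g) : IsTriangleEdges e g f := by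
  obtain ⟨u, v, w, huv, hvw, huw, rfl, rfl, rfl⟩ := h
  exact ⟨v, u, w, huv.symm, huw, hvw, Sym2.eq_swap, rfl, rfl⟩

lemma ne_right (h : IsTriangleEdges e f g) : f ≠ g := by
  obtain ⟨u, v, w, huv, hvw, huw, rfl, rfl, rfl⟩ := h
  rw [Ne, Sym2.eq_iff]
  rintro (⟨hvu, -⟩ | ⟨hvw', -⟩)
  exacts [huv hvu.symm, hvw hvw']

lemma ne_left (h : IsTriangleEdges e f g) : e ≠ g :=
  h.swap_left.ne_right

end IsTriangleEdges

lemma exists_eq_mk_of_mem_trianglePairs {G : Graph n} {e f : Sym2 (Fin n)}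
    {P : Sym2 (Sym2 (Fin n))} (hP : P ∈ trianglePairs G f) (heP : e ∈ P) :
    ∃ x, P = s(e, x) ∧ G x = true ∧ IsTriangleEdges f e x := by
  obtain ⟨g, h, rfl, hg, hh, ht⟩ := mem_trianglePairs.mp hP
  rcases Sym2.mem_iff.mp heP with rfl | rfl
  · exact ⟨h, rfl, hh, ht⟩
  · exact ⟨g, Sym2.eq_swap, hg, ht.swap_right⟩

lemma apply_eq_true_of_le {G H : Graph n} (hHG : H ≤ G) {x : Sym2 (Fin n)} (hx : H x = true) :
    G x = true :=
  Bool.le_iff_imp.mp (hHG x) hx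

lemma trianglePairs_mono {G H : Graph n} (hHG : H ≤ G) (e : Sym2 (Fin n)) :
    trianglePairs H e ⊆ trianglePairs G e := by
  intro P hP
  obtain ⟨f, g, rfl, hf, hg, ht⟩ := mem_trianglePairs.mp hP
  exact mem_trianglePairs.mpr
    ⟨f, g, rfl, apply_eq_true_of_le hHG hf, apply_eq_true_of_le hHG hg, ht⟩

lemma Y_mono {G H : Graph n} (hHG : H ≤ G) (e : Sym2 (Fin n)) : Y H e ≤ Y G e := by
  simpa only [Y_eq_card_trianglePairs] using card_le_card (trianglePairs_mono hHG e)

lemma Z_le_Y (G : Graph n) (e : Sym2 (Fin n)) : Z G e ≤ Y G e := by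
  unfold Z; split_ifs <;> omega

lemma Z_mono {G H : Graph n} (hHG : H ≤ G) (e : Sym2 (Fin n)) : Z H e ≤ Z G e := by
  unfold Z
  split_ifs with hH hG
  · exact Y_mono hHG e
  · exact absurd (apply_eq_true_of_le hHG hH) hG
  all_goals omega

lemma sparsify_le (G : Graph n) (ω : Sym2 (Fin n) → Bool) : sparsify G ω ≤ G :=
  fun _ => Bool.le_iff_imp.mpr fun h => (Bool.and_eq_true _ _).mp h |>.1

lemma removeEdge_le (G : Graph n) (e : Sym2 (Fin n)) : removeEdge G e ≤ G := by
  intro f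
  unfold removeEdge
  split_ifs <;> simp

lemma removeEdge_of_ne {G : Graph n} {e f : Sym2 (Fin n)} (hfe : f ≠ e) :
    removeEdge G e f = G f :=
  if_neg hfe

lemma sq_Z_removeEdge_le (H : Graph n) (e f : Sym2 (Fin n)) :
    (Z (removeEdge H e) f : ℝ) ^ 2 ≤ (Z H f : ℝ) ^ 2 := by
  gcongr
  exact Z_mono (removeEdge_le H e) f

lemma Z_removeEdge_self (G : Graph n) (e : Sym2 (Fin n)) : Z (removeEdge G e) e = 0 := by
  simp [Z, removeEdge]

lemma sparsify_update_false (G : Graph n) (ω : Sym2 (Fin n) → Bool) (e : Sym2 (Fin n)) :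
    sparsify G (Function.update ω e false) =
      removeEdge (sparsify G (Function.update ω e true)) e := by
  funext f
  by_cases hfe : f = e
  · subst hfe; simp [sparsify, removeEdge]
  · simp [sparsify, removeEdge, hfe]

section RemoveEdge

variable {G H : Graph n} {e f : Sym2 (Fin n)}

/-- A triangle on `f` that is destroyed by deleting `e` is `{f, e, x}`; swapping `e` and `f`
turns it injectively into a triangle pair of `e` in `G` through `f`. -/
lemma Y_le_Y_removeEdge_add (hHG : H ≤ G) (hf : H f = true) :
    Y H f ≤ Y (removeEdge H e) f + #{Q ∈ trianglePairs G e | f ∈ Q} := by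
  rw [Y_eq_card_trianglePairs, Y_eq_card_trianglePairs,
    ← card_filter_add_card_filter_not (s := trianglePairs H f) (p := fun Q => e ∉ Q)]
  refine add_le_add (card_le_card fun Q hQ => ?_) (card_le_card_of_injOn
    (Sym2.map (Equiv.swap e f)) (fun Q hQ => ?_) (Sym2.map.injective (Equiv.injective _)).injOn)
  · obtain ⟨hQ, heQ⟩ := mem_filter.mp hQ
    obtain ⟨a, b, rfl, ha, hb, ht⟩ := mem_trianglePairs.mp hQ
    have hae : a ≠ e := fun h => heQ (h ▸ Sym2.mem_mk_left a b)
    have hbe : b ≠ e := fun h => heQ (h ▸ Sym2.mem_mk_right a b)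
    exact mem_trianglePairs.mpr
      ⟨a, b, rfl, (removeEdge_of_ne hae).trans ha, (removeEdge_of_ne hbe).trans hb, ht⟩
  · obtain ⟨hQ, heQ⟩ := mem_filter.mp hQ
    obtain ⟨x, rfl, hx, ht⟩ := exists_eq_mk_of_mem_trianglePairs hQ (not_not.mp heQ)
    have hmap : Sym2.map (Equiv.swap e f) s(e, x) = s(f, x) := by
      rw [Sym2.map_mk, Equiv.swap_apply_left,
        Equiv.swap_apply_of_ne_of_ne ht.ne_right.symm ht.ne_left.symm]
    rw [coe_filter, Set.mem_ofPred_eq, hmap]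
    exact ⟨mem_trianglePairs.mpr ⟨f, x, rfl, apply_eq_true_of_le hHG hf,
      apply_eq_true_of_le hHG hx, ht.swap_left⟩, Sym2.mem_mk_left f x⟩

lemma sq_Z_sub_sq_Z_removeEdge_le_of_ne (hHG : H ≤ G) (hfe : f ≠ e) :
    (Z H f : ℝ) ^ 2 - (Z (removeEdge H e) f : ℝ) ^ 2 ≤
      2 * Y G f * #{Q ∈ trianglePairs G e | f ∈ Q} := by
  by_cases hf : H f = true
  · have hf' : removeEdge H e f = true := (removeEdge_of_ne hfe).trans hf
    simp only [Z, if_pos hf, if_pos hf']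
    have hdiff : (Y H f : ℝ) ≤ Y (removeEdge H e) f + #{Q ∈ trianglePairs G e | f ∈ Q} := by
      exact_mod_cast Y_le_Y_removeEdge_add hHG hf
    have hHf : (Y H f : ℝ) ≤ Y G f := by exact_mod_cast Y_mono hHG f
    have hrf : (Y (removeEdge H e) f : ℝ) ≤ Y H f := by
      exact_mod_cast Y_mono (removeEdge_le H e) f
    -- `a² - b² = (a - b)(a + b)` with `a - b ≤ #{…}` and `a + b ≤ 2 Y G f`
    nlinarith [(Nat.cast_nonneg (Y (removeEdge H e) f) : (0 : ℝ) ≤ _)]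
  · have hf' : removeEdge H e f ≠ true := (removeEdge_of_ne hfe).trans_ne hf
    simp only [Z, if_neg hf, if_neg hf', Nat.cast_zero, sub_self]
    positivity

lemma sq_Z_le_Z_mul_Y (hHG : H ≤ G) (e : Sym2 (Fin n)) :
    (Z H e : ℝ) ^ 2 ≤ Z G e * Y G e := by
  rw [sq]
  have hZ : (Z H e : ℝ) ≤ Z G e := by exact_mod_cast Z_mono hHG e
  have hY : (Z H e : ℝ) ≤ Y G e := by exact_mod_cast (Z_le_Y H e).trans (Y_mono hHG e)
  exact mul_le_mul hZ hY (Nat.cast_nonneg _) (Nat.cast_nonneg _)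

end RemoveEdge

/-- Each pair `Q = {a, b}` is counted once for `a` and once for `b`. -/
lemma sum_mul_card_filter_mem_le_sum_pairCost (h : Sym2 (Fin n) → ℝ) (h_nonneg : ∀ f, 0 ≤ h f)
    (T : Finset (Sym2 (Sym2 (Fin n)))) :
    ∑ f, 2 * h f * #{Q ∈ T | f ∈ Q} ≤ ∑ Q ∈ T, pairCost h Q := by
  calc ∑ f, 2 * h f * #{Q ∈ T | f ∈ Q}
      = ∑ Q ∈ T, ∑ f, if f ∈ Q then 2 * h f else 0 := by
        simp only [card_filter, Nat.cast_sum, mul_sum]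
        rw [sum_comm]
        exact sum_congr rfl fun Q _ => sum_congr rfl fun f _ => by split_ifs <;> simp
    _ ≤ ∑ Q ∈ T, pairCost h Q := by
        refine sum_le_sum fun Q _ => ?_
        induction Q using Sym2.ind with
        | h a b =>
          calc ∑ f, (if f ∈ s(a, b) then 2 * h f else 0)
              ≤ ∑ f, ((if f = a then 2 * h f else 0) + if f = b then 2 * h f else 0) := by
                refine sum_le_sum fun f _ => ?_
                have := h_nonneg f
                split_ifs <;> simp_all [Sym2.mem_iff]
            _ ≤ pairCost h s(a, b) := by
                simp [sum_add_distrib, pairCost]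

lemma sum_sq_Z_sub_sq_Z_removeEdge_le {G H : Graph n} (hHG : H ≤ G) (e : Sym2 (Fin n)) :
    ∑ f, ((Z H f : ℝ) ^ 2 - (Z (removeEdge H e) f : ℝ) ^ 2) ≤
      Z G e * Y G e + ∑ P ∈ trianglePairs G e, pairCost (fun f => (Y G f : ℝ)) P := by
  rw [← add_sum_erase _ _ (mem_univ e), Z_removeEdge_self, Nat.cast_zero, zero_pow two_ne_zero,
    sub_zero]
  gcongr
  · exact sq_Z_le_Z_mul_Y hHG e
  calc ∑ f ∈ univ.erase e, ((Z H f : ℝ) ^ 2 - (Z (removeEdge H e) f : ℝ) ^ 2)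
      ≤ ∑ f ∈ univ.erase e, 2 * (Y G f : ℝ) * #{Q ∈ trianglePairs G e | f ∈ Q} :=
        sum_le_sum fun f hf => sq_Z_sub_sq_Z_removeEdge_le_of_ne hHG (ne_of_mem_erase hf)
    _ ≤ ∑ f, 2 * (Y G f : ℝ) * #{Q ∈ trianglePairs G e | f ∈ Q} :=
        sum_le_univ_sum_of_nonneg fun f => by positivity
    _ ≤ _ := sum_mul_card_filter_mem_le_sum_pairCost _ (fun f => Nat.cast_nonneg _) _

theorem sum_Z_sq_lipschitz_general (n : ℕ) (G : Graph n) (e : Sym2 (Fin n))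
    (ω : Sym2 (Fin n) → Bool) :
    |(∑ f ∈ edges n, (Z (sparsify G (Function.update ω e true)) f : ℝ) ^ 2)
        - ∑ f ∈ edges n, (Z (sparsify G (Function.update ω e false)) f : ℝ) ^ 2|
      ≤ (Z G e : ℝ) * (Y G e : ℝ)
        + ∑ P ∈ trianglePairs G e, pairCost (fun f => (Y G f : ℝ)) P := by
  set H := sparsify G (Function.update ω e true)
  have hdiff_nonneg : ∀ f, 0 ≤ (Z H f : ℝ) ^ 2 - (Z (removeEdge H e) f : ℝ) ^ 2 :=
    fun f => sub_nonneg.mpr (sq_Z_removeEdge_le H e f)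
  rw [sparsify_update_false, ← sum_sub_distrib,
    abs_of_nonneg (sum_nonneg fun f _ => hdiff_nonneg f)]
  exact (sum_le_univ_sum_of_nonneg hdiff_nonneg).trans
    (sum_sq_Z_sub_sq_Z_removeEdge_le (sparsify_le G _) e)

/-- changing whether the edge `e` of `G` is retained in the
sparsification (keeping all other retention choices fixed) changes
`∑_{f ∈ K_n} Z f ²` by at most
`Z G e * Y G e + ∑_{{e', e''}} (2 * Y G e' + 2 * Y G e'' + 2)`, the last sum ranging
over the sets `{e', e''}` of edges of `G` forming a triangle with `e`. -/
theorem sum_Z_sq_lipschitz (n : ℕ) (G : Graph n) (e : Sym2 (Fin n))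
    (he : ¬ e.IsDiag) (heG : G e = true) (ω : Sym2 (Fin n) → Bool) :
    |(∑ f ∈ edges n, (Z (sparsify G (Function.update ω e true)) f : ℝ) ^ 2)
        - ∑ f ∈ edges n, (Z (sparsify G (Function.update ω e false)) f : ℝ) ^ 2|
      ≤ (Z G e : ℝ) * (Y G e : ℝ)
        + ∑ P ∈ trianglePairs G e, pairCost (fun f => (Y G f : ℝ)) P :=
  sum_Z_sq_lipschitz_general n G e ω

end RandomTriangles
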